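/- Let 0 ≤ m ≤ k ≤ n and let W ∈ Gr₂(n,k). Then the number of subspaces V ∈ Gr₂(n,k) with dim(V ∩ W) = m equals 2^{(k−m)²} · [n−k choose k−m]₂ · [k choose m]₂. -/

import Mathlib

/-!
Double counting. Call `(g, h)` adapted to `B ≤ A` if `g` is an independent `m`-family in `B`
and `h` is an `r`-family in `A` independent modulo `B`. A pair adapted to `W ≤ ⊤` spans a space
`V` of dimension `m + r` with `V ⊓ W = span g`, and the pairs spanning a given such `V` are exactly
those adapted to `V ⊓ W ≤ V`. Adapted pairs are counted through the number
`∏ i < t, (q ^ d - q ^ i)` of independent `t`-families in a `d`-dimensional space, applied to `B`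
for `g` and to `A ⧸ B` for `h`; each class in `A ⧸ B` has `q ^ dim B` lifts.
-/

/-- The Gaussian binomial coefficient `[n choose k]₂`, as a rational number:
`∏_{i=0}^{k-1}(2^{n-i}-1) / ∏_{i=0}^{k-1}(2^{k-i}-1)`. -/
def gbinomQ (n k : ℕ) : ℚ :=
  (∏ i ∈ Finset.range k, ((2 : ℚ) ^ (n - i) - 1)) /
    (∏ i ∈ Finset.range k, ((2 : ℚ) ^ (k - i) - 1))

open Module Submodule

theorem Nat.card_eq_card_mul_of_card_fiber_eq {α β : Type*} [Finite α] [Finite β] (f : α → β)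
    {c : ℕ} (hf : ∀ b, Nat.card {a // f a = b} = c) : Nat.card α = Nat.card β * c := by
  have := Fintype.ofFinite β
  rw [← Nat.card_congr (Equiv.sigmaFiberEquiv f), Nat.card_sigma,
    Finset.sum_congr rfl fun b _ => hf b, Finset.sum_const, Finset.card_univ, smul_eq_mul,
    Nat.card_eq_fintype_card]

section Subspaces

variable {K M : Type*} [DivisionRing K] [AddCommGroup M] [Module K M]

/-- For `t > finrank K M` both sides vanish: the factor at `i = finrank K M` is `0`. -/
theorem card_linearIndependent_eq_prod_range [Fintype K] [Module.Finite K M] (t : ℕ) :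
    Nat.card {s : Fin t → M // LinearIndependent K s} =
      ∏ i ∈ Finset.range t, (Fintype.card K ^ finrank K M - Fintype.card K ^ i) := by
  have : Finite M := Module.finite_of_finite K
  by_cases ht : t ≤ finrank K M
  · rw [card_linearIndependent ht, Fin.prod_univ_eq_prod_range (fun i => _ ^ _ - _ ^ i)]
  · have : IsEmpty {s : Fin t → M // LinearIndependent K s} :=
      ⟨fun s => ht (by simpa using s.2.fintype_card_le_finrank)⟩
    rw [Nat.card_of_isEmpty, eq_comm]
    exact Finset.prod_eq_zero (Finset.mem_range.2 (not_le.1 ht)) (Nat.sub_self _)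

theorem card_linearIndependent_mkQ_comp (U : Submodule K M) (t : ℕ) :
    Nat.card {h : Fin t → M // LinearIndependent K (U.mkQ ∘ h)} =
      Nat.card {s : Fin t → M ⧸ U // LinearIndependent K s} * Nat.card U ^ t := by
  obtain ⟨C, hC⟩ := U.exists_isCompl
  let E : M ≃ (M ⧸ U) × U := (U.prodEquivOfIsCompl C hC).symm.toEquiv.trans
    ((Equiv.prodComm _ _).trans
      (Equiv.prodCongr (U.quotientEquivOfIsCompl C hC).symm.toEquiv (Equiv.refl _)))
  have hE (x : M) : (E x).1 = U.mkQ x := by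
    conv_rhs => rw [← (U.prodEquivOfIsCompl C hC).apply_symm_apply x]
    simp [E, coe_prodEquivOfIsCompl']
  let F : (Fin t → M) ≃ (Fin t → M ⧸ U) × (Fin t → U) :=
    (Equiv.arrowCongr (Equiv.refl _) E).trans (Equiv.arrowProdEquivProdArrow _ _ _)
  have hF (h : Fin t → M) : (F h).1 = U.mkQ ∘ h := funext fun j => hE (h j)
  rw [Nat.card_congr ((F.subtypeEquiv fun h => by rw [hF]).trans
      (Equiv.prodSubtypeFstEquivSubtypeProd (p := fun s => LinearIndependent K s))),
    Nat.card_prod, Nat.card_fun, Nat.card_fin]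

theorem linearIndependent_mkQ_comp_iff {ι : Type*} (B : Submodule K M) (h : ι → M) :
    LinearIndependent K (B.mkQ ∘ h) ↔
      LinearIndependent K h ∧ Disjoint (span K (Set.range h)) B := by
  refine ⟨fun hh => ⟨hh.of_comp, by simpa using range_ker_disjoint hh⟩,
    fun ⟨hli, hdisj⟩ => (B.mkQ.linearIndependent_iff_of_disjoint ?_).2 hli⟩
  rwa [ker_mkQ]

theorem linearIndependent_mkQ_comap_subtype_comp_iff {ι : Type*} (A B : Submodule K M)
    (h : ι → A) :
    LinearIndependent K ((B.comap A.subtype).mkQ ∘ h) ↔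
      LinearIndependent K (B.mkQ ∘ A.subtype ∘ h) := by
  have hker : LinearMap.ker ((B.comap A.subtype).mapQ B A.subtype le_rfl) = ⊥ := by
    rw [ker_mapQ, mkQ_map_self]
  rw [← LinearMap.linearIndependent_iff _ hker, ← Function.comp_assoc, ← LinearMap.coe_comp,
    mapQ_mkQ]
  rfl

def indepModulo (A B : Submodule K M) (r : ℕ) : Set (Fin r → M) :=
  {h | (∀ j, h j ∈ A) ∧ LinearIndependent K (B.mkQ ∘ h)}

theorem card_indepModulo [Fintype K] [Module.Finite K M] {A B : Submodule K M} (hBA : B ≤ A)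
    (r : ℕ) :
    Nat.card (indepModulo A B r) = Fintype.card K ^ (finrank K B * r) *
      ∏ j ∈ Finset.range r,
        (Fintype.card K ^ (finrank K A - finrank K B) - Fintype.card K ^ j) := by
  let B' := B.comap A.subtype
  have hB' : finrank K B' = finrank K B := (comapSubtypeEquivOfLe hBA).finrank_eq
  let e : indepModulo A B r ≃ {h : Fin r → A // LinearIndependent K (B'.mkQ ∘ h)} :=
    { toFun h := ⟨fun j => ⟨h.1 j, h.2.1 j⟩,
        (linearIndependent_mkQ_comap_subtype_comp_iff A B _).2 h.2.2⟩
      invFun h := ⟨A.subtype ∘ h.1, fun j => (h.1 j).2,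
        (linearIndependent_mkQ_comap_subtype_comp_iff A B _).1 h.2⟩ }
  have : Finite B' := Module.finite_of_finite K
  have := Fintype.ofFinite B'
  rw [Nat.card_congr e, card_linearIndependent_mkQ_comp, card_linearIndependent_eq_prod_range,
    finrank_quotient, hB', Nat.card_eq_fintype_card, card_eq_pow_finrank (K := K) (V := B'), hB',
    ← pow_mul, mul_comm]

def adaptedPairs (A B : Submodule K M) (m r : ℕ) : Set ((Fin m → M) × (Fin r → M)) :=
  indepModulo B ⊥ m ×ˢ indepModulo A B r

theorem card_adaptedPairs [Fintype K] [Module.Finite K M] {A B : Submodule K M} (hBA : B ≤ A)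
    (m r : ℕ) :
    Nat.card (adaptedPairs A B m r) =
      (∏ i ∈ Finset.range m, (Fintype.card K ^ finrank K B - Fintype.card K ^ i)) *
        (Fintype.card K ^ (finrank K B * r) * ∏ j ∈ Finset.range r,
          (Fintype.card K ^ (finrank K A - finrank K B) - Fintype.card K ^ j)) := by
  rw [adaptedPairs, Nat.card_congr (Equiv.Set.prod _ _), Nat.card_prod, card_indepModulo bot_le,
    card_indepModulo hBA, finrank_bot, zero_mul, pow_zero, one_mul, Nat.sub_zero]

theorem finrank_span_union_of_mem_adaptedPairs {A B : Submodule K M} {m r : ℕ}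
    {p : (Fin m → M) × (Fin r → M)} (hp : p ∈ adaptedPairs A B m r) :
    finrank K (span K (Set.range p.1 ∪ Set.range p.2)) = m + r ∧
      finrank K ↥(span K (Set.range p.1 ∪ Set.range p.2) ⊓ B) = m := by
  obtain ⟨⟨hgB, hg⟩, -, hh⟩ := hp
  rw [linearIndependent_mkQ_comp_iff] at hg hh
  set G := span K (Set.range p.1)
  set H := span K (Set.range p.2)
  have hGB : G ≤ B := span_le.2 (Set.range_subset_iff.2 hgB)
  have hG : finrank K G = m := by simpa using finrank_span_eq_card hg.1
  have hH : finrank K H = r := by simpa using finrank_span_eq_card hh.1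
  have hGH : G ⊓ H = ⊥ := disjoint_iff.1 (hh.2.symm.mono_left hGB)
  rw [span_union, sup_inf_assoc_of_le H hGB, disjoint_iff.1 hh.2, sup_bot_eq, hG]
  refine ⟨?_, rfl⟩
  have : FiniteDimensional K G := FiniteDimensional.span_of_finite K (Set.finite_range _)
  have : FiniteDimensional K H := FiniteDimensional.span_of_finite K (Set.finite_range _)
  have := finrank_sup_add_finrank_inf_eq G H
  rw [hGH, finrank_bot, hG, hH] at this
  omega

theorem mem_adaptedPairs_inf_iff {V W : Submodule K M} {m r : ℕ}
    (p : (Fin m → M) × (Fin r → M)) :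
    p ∈ adaptedPairs V (V ⊓ W) m r ↔
      p ∈ adaptedPairs ⊤ W m r ∧ span K (Set.range p.1 ∪ Set.range p.2) ≤ V := by
  obtain ⟨g, h⟩ := p
  have hdisj (hV : ∀ j, h j ∈ V) :
      Disjoint (span K (Set.range h)) (V ⊓ W) ↔ Disjoint (span K (Set.range h)) W := by
    rw [disjoint_iff, disjoint_iff, ← inf_assoc,
      inf_eq_left.2 (span_le.2 (Set.range_subset_iff.2 hV))]
  simp only [adaptedPairs, indepModulo, Set.mem_prod, Set.mem_ofPred_eq, mem_top, mem_inf,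
    linearIndependent_mkQ_comp_iff, span_le, Set.union_subset_iff, Set.range_subset_iff,
    SetLike.mem_coe]
  constructor
  · rintro ⟨⟨hgVW, hg⟩, hhV, hh, hhVW⟩
    exact ⟨⟨⟨fun i => (hgVW i).2, hg⟩, fun _ => trivial, hh, (hdisj hhV).1 hhVW⟩,
      fun i => (hgVW i).1, hhV⟩
  · rintro ⟨⟨⟨hgW, hg⟩, -, hh, hhW⟩, hgV, hhV⟩
    exact ⟨⟨fun i => ⟨hgV i, hgW i⟩, hg⟩, hhV, hh, (hdisj hhV).2 hhW⟩

theorem card_subspaces_finrank_inf_mul [Fintype K] [Finite M] (W : Submodule K M) {m r : ℕ}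
    (hW : finrank K W = m + r) :
    Nat.card {V : Submodule K M // finrank K V = m + r ∧ finrank K ↥(V ⊓ W) = m} *
      ((∏ i ∈ Finset.range m, (Fintype.card K ^ m - Fintype.card K ^ i)) *
        (Fintype.card K ^ (m * r) *
          ∏ j ∈ Finset.range r, (Fintype.card K ^ r - Fintype.card K ^ j))) =
    (∏ i ∈ Finset.range m, (Fintype.card K ^ (m + r) - Fintype.card K ^ i)) *
      (Fintype.card K ^ ((m + r) * r) * ∏ j ∈ Finset.range r,
        (Fintype.card K ^ (finrank K M - (m + r)) - Fintype.card K ^ j)) := by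
  let Φ : adaptedPairs ⊤ W m r →
      {V : Submodule K M // finrank K V = m + r ∧ finrank K ↥(V ⊓ W) = m} :=
    fun p => ⟨_, finrank_span_union_of_mem_adaptedPairs p.2⟩
  have hfiber (V : {V : Submodule K M // finrank K V = m + r ∧ finrank K ↥(V ⊓ W) = m}) :
      {p // Φ p = V} ≃ adaptedPairs V.1 (V.1 ⊓ W) m r := by
    have hΦ (p : adaptedPairs ⊤ W m r) :
        Φ p = V ↔ span K (Set.range p.1.1 ∪ Set.range p.1.2) ≤ V.1 :=
      ⟨fun h => h ▸ le_rfl, fun h => Subtype.ext (eq_of_le_of_finrank_eq h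
        (by rw [(finrank_span_union_of_mem_adaptedPairs p.2).1, V.2.1]))⟩
    exact (Equiv.subtypeEquivRight hΦ).trans
      ((Equiv.subtypeSubtypeEquivSubtypeInter _ _).trans
        (Equiv.subtypeEquivRight fun p => (mem_adaptedPairs_inf_iff p).symm))
  have htotal := card_adaptedPairs (A := ⊤) (B := W) le_top m r
  rw [finrank_top, hW] at htotal
  rw [← htotal, Nat.card_eq_card_mul_of_card_fiber_eq Φ fun V => by
      rw [Nat.card_congr (hfiber V), card_adaptedPairs inf_le_left, V.2.1, V.2.2,
        Nat.add_sub_cancel_left]]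

end Subspaces

theorem cast_prod_two_pow_sub_two_pow {a t : ℕ} (hta : t ≤ a) :
    ((∏ i ∈ Finset.range t, (2 ^ a - 2 ^ i) : ℕ) : ℚ) =
      (∏ i ∈ Finset.range t, (2 : ℚ) ^ i) * ∏ i ∈ Finset.range t, ((2 : ℚ) ^ (a - i) - 1) := by
  rw [Nat.cast_prod, ← Finset.prod_mul_distrib]
  refine Finset.prod_congr rfl fun i hi => ?_
  have hia : i ≤ a := (Finset.mem_range.1 hi).le.trans hta
  rw [Nat.cast_sub (Nat.pow_le_pow_right two_pos hia), mul_sub, ← pow_add,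
    Nat.add_sub_cancel' hia]
  push_cast
  ring

theorem gbinomQ_eq_div (a t : ℕ) :
    gbinomQ a t = ((∏ i ∈ Finset.range t, (2 ^ a - 2 ^ i) : ℕ) : ℚ) /
      ((∏ i ∈ Finset.range t, (2 ^ t - 2 ^ i) : ℕ) : ℚ) := by
  rcases le_or_gt t a with hta | hat
  · rw [cast_prod_two_pow_sub_two_pow hta, cast_prod_two_pow_sub_two_pow le_rfl, gbinomQ,
      mul_div_mul_left _ _ (Finset.prod_ne_zero_iff.2 fun _ _ => by positivity)]
  · have hnum : ∏ i ∈ Finset.range t, ((2 : ℚ) ^ (a - i) - 1) = 0 :=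
      Finset.prod_eq_zero (Finset.mem_range.2 hat) (by simp)
    have hnum' : ∏ i ∈ Finset.range t, (2 ^ a - 2 ^ i) = 0 :=
      Finset.prod_eq_zero (Finset.mem_range.2 hat) (Nat.sub_self _)
    rw [gbinomQ, hnum, hnum', Nat.cast_zero, zero_div, zero_div]

theorem prod_two_pow_sub_two_pow_pos (t : ℕ) : 0 < ∏ i ∈ Finset.range t, (2 ^ t - 2 ^ i) :=
  Finset.prod_pos fun _ hi =>
    Nat.sub_pos_of_lt (Nat.pow_lt_pow_right one_lt_two (Finset.mem_range.1 hi))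

theorem card_subspaces_with_intersection_dim {n k m : ℕ} (hmk : m ≤ k)
    (W : Submodule (ZMod 2) (Fin n → ZMod 2)) (hW : Module.finrank (ZMod 2) W = k) :
    (Nat.card {V : Submodule (ZMod 2) (Fin n → ZMod 2) //
        Module.finrank (ZMod 2) V = k ∧ Module.finrank (ZMod 2) ↥(V ⊓ W) = m} : ℚ) =
      2 ^ ((k - m) ^ 2) * gbinomQ (n - k) (k - m) * gbinomQ k m := by
  obtain ⟨r, rfl⟩ := Nat.exists_eq_add_of_le hmk
  have key := card_subspaces_finrank_inf_mul W hW
  rw [ZMod.card, finrank_fin_fun] at key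
  have hm := prod_two_pow_sub_two_pow_pos m
  have hr := prod_two_pow_sub_two_pow_pos r
  rw [Nat.add_sub_cancel_left, gbinomQ_eq_div, gbinomQ_eq_div]
  have keyQ := congrArg (Nat.cast : ℕ → ℚ) key
  simp only [Nat.cast_mul, Nat.cast_pow, Nat.cast_ofNat] at keyQ
  field_simp
  apply mul_left_cancel₀ (pow_ne_zero (m * r) (two_ne_zero : (2 : ℚ) ≠ 0))
  linear_combination keyQ
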